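/- Let w : Ω ⊂ ℝⁿ → ℝ^m be C^{1,1} with ∂₁w¹ ≥ 0, and suppose there is a smooth H : Ω → ℝ with {w¹₁ = 0} = {H ≥ 0} ⋐ Ω, such that w satisfies ∂ᵢ(√(det g) g^{ij} ∂ⱼw^α) = δ_{α1} ∂₁H χ_{H>0} weakly, where g = I + DwᵀDw. Then for every φ ∈ C^∞_0(Ω; ℝ^m) with ∂₁φ¹ ≥ 0 on {H ≥ 0}, one has −∫_Ω ∑_{α,i} ∂ᵢ(F_{p^α_i}(Dw)) φ^α dx ≥ 0, i.e. w solves the variational inequality for area subject to the gradient constraint ∂₁w¹ ≥ 0. -/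

import Mathlib

noncomputable section
open Matrix MeasureTheory

attribute [local instance] Matrix.normedAddCommGroup Matrix.normedSpace

/-- Partial derivative `∂ᵢφ(x)`. -/
def pd {n : ℕ} (φ : (Fin n → ℝ) → ℝ) (i : Fin n) (x : Fin n → ℝ) : ℝ :=
  fderiv ℝ φ x (Pi.single i 1)

/-- The Jacobian matrix `Dw(x)`. -/
def Jac {n m : ℕ} (w : (Fin n → ℝ) → Fin m → ℝ) (x : Fin n → ℝ) :
    Matrix (Fin m) (Fin n) ℝ :=
  Matrix.of fun α i => fderiv ℝ (fun y => w y α) x (Pi.single i 1)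

/-- The area integrand `F(M) = √det(Iₙ + MᵀM)`. -/
def Farea {m n : ℕ} (M : Matrix (Fin m) (Fin n) ℝ) : ℝ :=
  Real.sqrt (1 + Mᵀ * M).det

/-- `F_{p^α_i}(M)`, the derivative of the area integrand in the matrix entry `(α,i)`. -/
def DFarea {m n : ℕ} (M : Matrix (Fin m) (Fin n) ℝ) (α : Fin m) (i : Fin n) : ℝ :=
  fderiv ℝ Farea M (Matrix.single α i 1)

/-- a `C^{1,1}` map `w` with `∂₁w¹ ≥ 0`, whose degeneracy set
`{∂₁w¹ = 0} = {H ≥ 0} ⋐ Ω`, and which solves (weakly)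
`∂ᵢ(√(det g) g^{ij}∂ⱼw^α) = δ_{α1} ∂₁H χ_{H>0}` (i.e. `∂ᵢ(F_{p^α_i}(Dw)) = δ_{α1}∂₁H χ_{H>0}`),
satisfies the variational inequality for area subject to the constraint `∂₁w¹ ≥ 0`:
for every smooth compactly supported `φ` with `∂₁φ¹ ≥ 0` on `{H ≥ 0}`,
`−∫ ∑ ∂ᵢ(F_{p^α_i}(Dw)) φ^α = ∫ ∑ F_{p^α_i}(Dw) ∂ᵢφ^α ≥ 0`. -/
theorem gradient_constrained_variational_inequality {n m : ℕ} [NeZero n] [NeZero m]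
    (Ω : Set (Fin n → ℝ)) (hΩ : IsOpen Ω) (hΩb : Bornology.IsBounded Ω)
    (w : (Fin n → ℝ) → Fin m → ℝ)
    (hw : ContDiffOn ℝ 1 w Ω)
    (hwLip : ∃ K : NNReal, LipschitzOnWith K (fun x => Jac w x) Ω)
    (H : (Fin n → ℝ) → ℝ) (hH : ContDiff ℝ (⊤ : ℕ∞) H)
    (hmono : ∀ x ∈ Ω, 0 ≤ pd (fun y => w y 0) 0 x)
    (hdeg : {x ∈ Ω | pd (fun y => w y 0) 0 x = 0} = {x ∈ Ω | 0 ≤ H x})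
    (hcc : IsCompact {x ∈ Ω | 0 ≤ H x} ∧ {x ∈ Ω | 0 ≤ H x} ⊆ Ω)
    (hweak : ∀ ψ : (Fin n → ℝ) → Fin m → ℝ,
      ContDiff ℝ (⊤ : ℕ∞) ψ → HasCompactSupport ψ → tsupport ψ ⊆ Ω →
      ∫ x in Ω, ∑ α, ∑ i, DFarea (Jac w x) α i * pd (fun y => ψ y α) i x
        = -∫ x in Ω, (if 0 < H x then pd H 0 x else 0) * ψ x 0) :
    ∀ φ : (Fin n → ℝ) → Fin m → ℝ,
      ContDiff ℝ (⊤ : ℕ∞) φ → HasCompactSupport φ → tsupport φ ⊆ Ω →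
      (∀ x ∈ Ω, 0 ≤ H x → 0 ≤ pd (fun y => φ y 0) 0 x) →
      0 ≤ ∫ x in Ω, ∑ α, ∑ i, DFarea (Jac w x) α i * pd (fun y => φ y α) i x := by
  intro φ hφ hφc hφs hφ1
  rw [hweak φ hφ hφc hφs, neg_nonneg]
  set v : Fin n → ℝ := Pi.single (0 : Fin n) 1 with hv
  set φ₁ : (Fin n → ℝ) → ℝ := fun x => φ x 0 with hφ₁def
  -- basic facts about φ₁
  have hφ₁ : ContDiff ℝ (⊤ : ℕ∞) φ₁ := (contDiff_pi.mp hφ) 0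
  have hφ₁c : HasCompactSupport φ₁ := hφc.comp_left (g := fun u : Fin m → ℝ => u 0) rfl
  have hφ₁s : tsupport φ₁ ⊆ Ω := by
    refine (closure_minimal ?_ isClosed_closure).trans hφs
    intro x hx
    exact subset_closure (fun h : φ x = 0 => hx (by simp [φ₁, h]))
  have hφ₁d : Differentiable ℝ φ₁ := hφ₁.differentiable (by simp)
  have hpdφ : ∀ x ∉ Ω, fderiv ℝ φ₁ x = 0 := by
    intro x hx
    by_contra h
    exact hx (hφ₁s (support_fderiv_subset ℝ (f := φ₁) h))
  have hpdφc : Continuous fun x => fderiv ℝ φ₁ x v :=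
    (hφ₁.fderiv_right (m := (⊤ : ℕ∞)) (by simp)).continuous.clm_apply continuous_const
  -- basic facts about H
  have hHd : Differentiable ℝ H := hH.differentiable (by simp)
  have hHdc : Continuous fun x => fderiv ℝ H x v :=
    (hH.fderiv_right (m := (⊤ : ℕ∞)) (by simp)).continuous.clm_apply continuous_const
  -- the dominating function
  have hdomc : Continuous fun x => fderiv ℝ H x v * φ₁ x :=
    hHdc.mul (hφ₁.continuous)
  have hdomcs : HasCompactSupport fun x => fderiv ℝ H x v * φ₁ x := by
    have := hφ₁c.mul_left (f := fun x => fderiv ℝ H x v)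
    simpa [Pi.mul_def] using this
  have hdomint : Integrable (fun x => fderiv ℝ H x v * φ₁ x) volume :=
    hdomc.integrable_of_hasCompactSupport hdomcs
  -- rewrite the set integral as an integral over the whole space
  have hres : ∫ x in Ω, (if 0 < H x then pd H 0 x else 0) * φ x 0
      = ∫ x, (if 0 < H x then fderiv ℝ H x v else 0) * φ₁ x := by
    have h0 : ∀ x ∉ Ω, (if 0 < H x then pd H 0 x else 0) * φ x 0 = 0 := by
      intro x hx
      have : φ x = 0 := image_eq_zero_of_notMem_tsupport (fun h => hx (hφs h))
      simp [this]
    rw [setIntegral_eq_integral_of_forall_compl_eq_zero h0]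
    rfl
  rw [hres]
  -- the key inequality for the smoothed cut-off
  have key : ∀ ε : ℝ, 0 < ε →
      ∫ x, Real.smoothTransition (H x / ε) * (fderiv ℝ H x v * φ₁ x) ≤ 0 := by
    intro ε hε
    set p : ℝ → ℝ := fun t => ∫ s in (0:ℝ)..t, Real.smoothTransition (s / ε) with hpdef
    have hqc : Continuous fun s : ℝ => Real.smoothTransition (s / ε) :=
      Real.smoothTransition.continuous.comp (continuous_id.div_const ε)
    have hp : ∀ t : ℝ, HasDerivAt p (Real.smoothTransition (t / ε)) t :=
      fun t => (hqc.integral_hasStrictDerivAt 0 t).hasDerivAt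
    have hp0 : ∀ t : ℝ, t ≤ 0 → p t = 0 := by
      intro t ht
      have heq : Set.EqOn (fun s => Real.smoothTransition (s / ε)) (fun _ => (0:ℝ))
          (Set.uIcc t 0) := by
        intro s hs
        rw [Set.uIcc_of_le ht] at hs
        exact Real.smoothTransition.zero_of_nonpos
          (div_nonpos_of_nonpos_of_nonneg hs.2 hε.le)
      have hz : ∫ s in t..(0:ℝ), Real.smoothTransition (s / ε) = 0 := by
        rw [intervalIntegral.integral_congr heq]; simp
      show (∫ s in (0:ℝ)..t, Real.smoothTransition (s / ε)) = 0
      rw [intervalIntegral.integral_symm, hz, neg_zero]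
    have hpnn : ∀ t : ℝ, 0 ≤ p t := by
      intro t
      rcases le_or_gt t 0 with h | h
      · exact (hp0 t h).ge
      · exact intervalIntegral.integral_nonneg h.le
          (fun s _ => Real.smoothTransition.nonneg _)
    -- the composite
    set F : (Fin n → ℝ) → ℝ := fun x => p (H x) with hFdef
    have hF : ∀ x, HasFDerivAt F
        (Real.smoothTransition (H x / ε) • fderiv ℝ H x) x :=
      fun x => (hp (H x)).comp_hasFDerivAt x (hHd x).hasFDerivAt
    have hFdiff : Differentiable ℝ F := fun x => (hF x).differentiableAt
    have hFd : ∀ x, fderiv ℝ F x v = Real.smoothTransition (H x / ε) * fderiv ℝ H x v :=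
      fun x => by rw [(hF x).fderiv]; simp
    have hF0 : ∀ x, H x ≤ 0 → F x = 0 := fun x hx => hp0 _ hx
    -- integrability
    have hint1 : Integrable (fun x => fderiv ℝ F x v * φ₁ x) volume := by
      have hc : Continuous fun x => fderiv ℝ F x v * φ₁ x := by
        have : (fun x => fderiv ℝ F x v * φ₁ x)
            = fun x => (Real.smoothTransition (H x / ε) * fderiv ℝ H x v) * φ₁ x := by
          funext x; rw [hFd x]
        rw [this]
        exact ((hqc.comp hH.continuous).mul hHdc).mul hφ₁.continuous
      have hcs : HasCompactSupport fun x => fderiv ℝ F x v * φ₁ x := by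
        have := hφ₁c.mul_left (f := fun x => fderiv ℝ F x v)
        simpa [Pi.mul_def] using this
      exact hc.integrable_of_hasCompactSupport hcs
    have hint2 : Integrable (fun x => F x * fderiv ℝ φ₁ x v) volume := by
      have hc : Continuous fun x => F x * fderiv ℝ φ₁ x v :=
        (hFdiff.continuous).mul hpdφc
      have hcs' : HasCompactSupport fun x => fderiv ℝ φ₁ x v := by
        have h1 : HasCompactSupport (fderiv ℝ φ₁) := hφ₁c.fderiv ℝ
        exact h1.comp_left (g := fun L : (Fin n → ℝ) →L[ℝ] ℝ => L v) rfl
      have hcs : HasCompactSupport fun x => F x * fderiv ℝ φ₁ x v := by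
        have := hcs'.mul_left (f := F)
        simpa [Pi.mul_def] using this
      exact hc.integrable_of_hasCompactSupport hcs
    have hint3 : Integrable (fun x => F x * φ₁ x) volume := by
      have hc : Continuous fun x => F x * φ₁ x := (hFdiff.continuous).mul hφ₁.continuous
      have hcs : HasCompactSupport fun x => F x * φ₁ x := by
        have := hφ₁c.mul_left (f := F)
        simpa [Pi.mul_def] using this
      exact hc.integrable_of_hasCompactSupport hcs
    -- integration by parts
    have hibp := integral_mul_fderiv_eq_neg_fderiv_mul_of_integrable
      (f := F) (g := φ₁) (v := v) (μ := volume) hint1 hint2 hint3 (fun x _ => hFdiff x) (fun x _ => hφ₁d x)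
    -- ∫ F * ∂₁φ₁ ≥ 0
    have hnn : 0 ≤ ∫ x, F x * fderiv ℝ φ₁ x v := by
      apply integral_nonneg
      intro x
      rcases le_or_gt (H x) 0 with h | h
      · simp [hF0 x h]
      · rcases Classical.em (x ∈ Ω) with hx | hx
        · exact mul_nonneg (hpnn _) (hφ1 x hx h.le)
        · simp [hpdφ x hx]
    have := hibp ▸ hnn
    have heq : (fun x => fderiv ℝ F x v * φ₁ x)
        = fun x => Real.smoothTransition (H x / ε) * (fderiv ℝ H x v * φ₁ x) := by
      funext x; rw [hFd x]; ring
    rw [heq] at this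
    linarith [this]
  -- pass to the limit ε → 0 via dominated convergence
  have hεk : ∀ k : ℕ, (0:ℝ) < 1 / (k + 1) := fun k => by positivity
  have hDCT : Filter.Tendsto
      (fun k : ℕ => ∫ x, Real.smoothTransition (H x / (1 / (k + 1))) *
        (fderiv ℝ H x v * φ₁ x))
      Filter.atTop
      (nhds (∫ x, (if 0 < H x then fderiv ℝ H x v else 0) * φ₁ x)) := by
    apply tendsto_integral_of_dominated_convergence
      (bound := fun x => |fderiv ℝ H x v * φ₁ x|)
    · intro k
      exact (((Real.smoothTransition.continuous.comp
        ((hH.continuous).div_const _)).mul hdomc)).aestronglyMeasurable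
    · exact hdomint.abs
    · intro k
      filter_upwards with x
      rw [Real.norm_eq_abs, abs_mul]
      calc |Real.smoothTransition (H x / (1 / (k + 1)))| * |fderiv ℝ H x v * φ₁ x|
          ≤ 1 * |fderiv ℝ H x v * φ₁ x| := by
            apply mul_le_mul_of_nonneg_right _ (abs_nonneg _)
            rw [abs_of_nonneg (Real.smoothTransition.nonneg _)]
            exact Real.smoothTransition.le_one _
        _ = |fderiv ℝ H x v * φ₁ x| := one_mul _
    · filter_upwards with x
      rcases lt_or_ge 0 (H x) with h | h
      · have hev : ∀ᶠ k : ℕ in Filter.atTop,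
            Real.smoothTransition (H x / (1 / (k + 1))) * (fderiv ℝ H x v * φ₁ x)
              = (if 0 < H x then fderiv ℝ H x v else 0) * φ₁ x := by
          have : Filter.Tendsto (fun k : ℕ => 1 / ((k:ℝ) + 1)) Filter.atTop (nhds 0) :=
            tendsto_one_div_add_atTop_nhds_zero_nat
          filter_upwards [this.eventually_le_const h] with k hk
          have h1 : (1:ℝ) ≤ H x / (1 / (k + 1)) := by
            rw [one_le_div (hεk k)]
            exact hk
          rw [Real.smoothTransition.one_of_one_le h1, if_pos h]
          ring
        exact tendsto_const_nhds.congr' (hev.mono fun k hk => hk.symm)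
      · have : ∀ k : ℕ,
            Real.smoothTransition (H x / (1 / (k + 1))) * (fderiv ℝ H x v * φ₁ x)
              = (if 0 < H x then fderiv ℝ H x v else 0) * φ₁ x := by
          intro k
          rw [Real.smoothTransition.zero_of_nonpos
            (div_nonpos_of_nonpos_of_nonneg h (hεk k).le), if_neg (not_lt.mpr h)]
          ring
        exact tendsto_const_nhds.congr fun k => (this k).symm
  exact le_of_tendsto hDCT (Filter.Eventually.of_forall fun k => key _ (hεk k))
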